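/- arXiv:2505.06106 — 3 statements merged into one kernel-verified Lean document; each statement's English description precedes it below -/
import Mathlib

section
/- Let q : ℝ → ℝ be four times continuously differentiable and τ > 0. Define D(w) = q(0) - q(-τ) + ((1-w)/2)(q(τ) - 2q(0) + q(-τ)) + (w/2)(q(0) - 2q(-τ) + q(-2τ)). Then for every w ∈ ℝ, D(w) = τ q'(0) + O(τ³) as τ → 0, and for w = 1/3, D(1/3) = τ q'(0) + O(τ⁴). -/
open Asymptotics Filter

lemma stepA {g : ℝ → ℝ} {n : ℕ} (hg : Differentiable ℝ g) (h0 : g 0 = 0)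
    (hd : (deriv g) =o[nhds 0] fun h : ℝ => h ^ n) :
    g =o[nhds 0] fun h : ℝ => h ^ (n + 1) := by
  rw [Asymptotics.isLittleO_iff] at hd ⊢
  intro ε hε
  have hd' := hd hε
  rw [Metric.eventually_nhds_iff] at hd' ⊢
  obtain ⟨δ, hδ, H⟩ := hd'
  refine ⟨δ, hδ, fun {h} hh => ?_⟩
  have key : ‖g h - g 0‖ ≤ (ε * |h| ^ n) * ‖h - 0‖ := by
    refine (convex_uIcc (0:ℝ) h).norm_image_sub_le_of_norm_hasDerivWithin_le
      (f' := deriv g) (fun t _ => (hg t).hasDerivAt.hasDerivWithinAt) ?_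
      Set.left_mem_uIcc Set.right_mem_uIcc
    intro t ht
    have habs : |t| ≤ |h| := by
      rcases le_total 0 h with hc | hc
      · rw [Set.uIcc_of_le hc] at ht
        rw [abs_of_nonneg ht.1, abs_of_nonneg hc]; exact ht.2
      · rw [Set.uIcc_of_ge hc] at ht
        rw [abs_of_nonpos ht.2, abs_of_nonpos hc]; linarith [ht.1]
    have hti : dist t 0 < δ := by
      rw [Real.dist_eq, sub_zero]
      rw [Real.dist_eq, sub_zero] at hh
      exact habs.trans_lt hh
    calc ‖deriv g t‖ ≤ ε * ‖t ^ n‖ := H hti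
      _ = ε * |t| ^ n := by rw [Real.norm_eq_abs, abs_pow]
      _ ≤ ε * |h| ^ n := by
          exact mul_le_mul_of_nonneg_left (pow_le_pow_left₀ (abs_nonneg t) habs n) hε.le
  rw [h0, sub_zero, sub_zero] at key
  calc ‖g h‖ ≤ ε * |h| ^ n * ‖h‖ := key
    _ = ε * ‖h ^ (n + 1)‖ := by
        rw [Real.norm_eq_abs, Real.norm_eq_abs, abs_pow]; ring

lemma peano : ∀ (n : ℕ) (f : ℝ → ℝ), ContDiff ℝ n f →
    (fun h : ℝ => f h - ∑ k ∈ Finset.range (n + 1),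
        iteratedDeriv k f 0 / k.factorial * h ^ k)
      =o[nhds 0] fun h : ℝ => h ^ n := by
  intro n
  induction n with
  | zero =>
    intro f hf
    have h1 : Filter.Tendsto (fun h : ℝ => f h - f 0) (nhds 0) (nhds 0) := by
      have := (hf.continuous.tendsto 0).sub_const (f 0)
      simpa using this
    have := Asymptotics.isLittleO_one_iff ℝ |>.mpr h1
    simpa [iteratedDeriv_zero] using this
  | succ n ih =>
    intro f hf
    have hf' : ContDiff ℝ ((n : ℕ∞) + 1) f := by exact_mod_cast hf
    have hdf : ContDiff ℝ n (deriv f) := (contDiff_succ_iff_deriv.mp hf').2.2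
    have hfd : Differentiable ℝ f := (contDiff_succ_iff_deriv.mp hf').1
    set P : ℝ → ℝ := fun h => ∑ k ∈ Finset.range (n + 2),
        iteratedDeriv k f 0 / k.factorial * h ^ k with hP
    have hPd : ∀ h : ℝ, HasDerivAt P
        (∑ k ∈ Finset.range (n + 2),
          iteratedDeriv k f 0 / k.factorial * (k * h ^ (k - 1))) h := by
      intro h
      exact HasDerivAt.fun_sum fun k _ => (hasDerivAt_pow k h).const_mul _
    have hg : Differentiable ℝ (fun h : ℝ => f h - P h) :=
      hfd.sub fun h => ((hPd h).differentiableAt)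
    have h0 : f 0 - P 0 = 0 := by
      simp [hP, Finset.sum_range_succ', zero_pow]
    have hder : (deriv fun h : ℝ => f h - P h) = fun h : ℝ =>
        deriv f h - ∑ k ∈ Finset.range (n + 1),
          iteratedDeriv k (deriv f) 0 / k.factorial * h ^ k := by
      funext h
      rw [deriv_fun_sub (hfd h) ((hPd h).differentiableAt), (hPd h).deriv]
      congr 1
      rw [Finset.sum_range_succ']
      simp only [Nat.cast_zero, zero_mul, mul_zero, add_zero]
      refine Finset.sum_congr rfl fun i _ => ?_
      rw [iteratedDeriv_succ']
      have : ((i + 1).factorial : ℝ) = (i + 1) * i.factorial := by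
        rw [Nat.factorial_succ]; push_cast; ring
      rw [this]
      have h1 : ((i : ℝ) + 1) ≠ 0 := by positivity
      have h2 : (i.factorial : ℝ) ≠ 0 := Nat.cast_ne_zero.mpr i.factorial_ne_zero
      field_simp
      simp only [Nat.add_sub_cancel, Nat.cast_add, Nat.cast_one]
    have := stepA hg (by simpa using h0) (by rw [hder]; exact ih (deriv f) hdf)
    simpa [hP] using this


theorem stmt2 (q : ℝ → ℝ) (hq : ContDiff ℝ 4 q) :
    (∀ w : ℝ,
      (fun τ : ℝ => (q 0 - q (-τ) + ((1 - w) / 2) * (q τ - 2 * q 0 + q (-τ))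
          + (w / 2) * (q 0 - 2 * q (-τ) + q (-(2 * τ)))) - τ * deriv q 0)
        =O[nhds 0] fun τ : ℝ => τ ^ 3) ∧
    ((fun τ : ℝ => (q 0 - q (-τ) + ((1 - (1/3 : ℝ)) / 2) * (q τ - 2 * q 0 + q (-τ))
        + ((1/3 : ℝ) / 2) * (q 0 - 2 * q (-τ) + q (-(2 * τ)))) - τ * deriv q 0)
      =O[nhds 0] fun τ : ℝ => τ ^ 4) := by
  set P : ℝ → ℝ := fun h => ∑ k ∈ Finset.range 5,
      iteratedDeriv k q 0 / k.factorial * h ^ k with hPdef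
  have hR : (fun h : ℝ => q h - P h) =o[nhds 0] fun h : ℝ => h ^ 4 := by
    have := peano 4 q (by exact_mod_cast hq)
    simpa [hPdef] using this
  have hO : ∀ c : ℝ, (fun τ : ℝ => q (c * τ) - P (c * τ)) =O[nhds 0] fun τ : ℝ => τ ^ 4 := by
    intro c
    have ht : Filter.Tendsto (fun τ : ℝ => c * τ) (nhds 0) (nhds 0) := by
      simpa using (Filter.Tendsto.const_mul c (tendsto_id (x := nhds (0 : ℝ))))
    have h1 := hR.isBigO.comp_tendsto ht
    have h2 : (fun τ : ℝ => (c * τ) ^ 4) =O[nhds 0] fun τ : ℝ => τ ^ 4 := by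
      simpa [mul_pow] using (isBigO_refl (fun τ : ℝ => τ ^ 4) (nhds 0)).const_mul_left (c ^ 4)
    exact (by simpa [Function.comp_def] using h1 : (fun τ : ℝ => q (c * τ) - P (c * τ))
      =O[nhds 0] fun τ : ℝ => (c * τ) ^ 4).trans h2
  have key : ∀ w : ℝ,
      (fun τ : ℝ => ((q 0 - q (-τ) + ((1 - w) / 2) * (q τ - 2 * q 0 + q (-τ))
          + (w / 2) * (q 0 - 2 * q (-τ) + q (-(2 * τ)))) - τ * deriv q 0)
          - (1/6 - w/2) * iteratedDeriv 3 q 0 * τ ^ 3)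
        =O[nhds 0] fun τ : ℝ => τ ^ 4 := by
    intro w
    have comb : (fun τ : ℝ =>
        (1 - w) / 2 * (q (1 * τ) - P (1 * τ))
        + (-1 + (1 - w) / 2 - w) * (q ((-1) * τ) - P ((-1) * τ))
        + (w / 2 * (q ((-2) * τ) - P ((-2) * τ))
        + (3 * w / 2 * (q (0 * τ) - P (0 * τ))
        + w / 4 * iteratedDeriv 4 q 0 * τ ^ 4)))
        =O[nhds 0] fun τ : ℝ => τ ^ 4 := by
      refine (((hO 1).const_mul_left _).add ((hO (-1)).const_mul_left _)).add
        (((hO (-2)).const_mul_left _).add (((hO 0).const_mul_left _).add ?_))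
      simpa [mul_assoc] using
        (isBigO_refl (fun τ : ℝ => τ ^ 4) (nhds 0)).const_mul_left
          (w / 4 * iteratedDeriv 4 q 0)
    have hfun : (fun τ : ℝ => ((q 0 - q (-τ) + ((1 - w) / 2) * (q τ - 2 * q 0 + q (-τ))
          + (w / 2) * (q 0 - 2 * q (-τ) + q (-(2 * τ)))) - τ * deriv q 0)
          - (1/6 - w/2) * iteratedDeriv 3 q 0 * τ ^ 3)
        = (fun τ : ℝ =>
        (1 - w) / 2 * (q (1 * τ) - P (1 * τ))
        + (-1 + (1 - w) / 2 - w) * (q ((-1) * τ) - P ((-1) * τ))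
        + (w / 2 * (q ((-2) * τ) - P ((-2) * τ))
        + (3 * w / 2 * (q (0 * τ) - P (0 * τ))
        + w / 4 * iteratedDeriv 4 q 0 * τ ^ 4))) := by
      funext τ
      have h1 : (1 : ℝ) * τ = τ := one_mul τ
      have h2 : (-1 : ℝ) * τ = -τ := by ring
      have h3 : (-2 : ℝ) * τ = -(2 * τ) := by ring
      have h4 : (0 : ℝ) * τ = 0 := zero_mul τ
      rw [h1, h2, h3, h4]
      simp only [hPdef, Finset.sum_range_succ, Finset.sum_range_zero]
      simp only [iteratedDeriv_zero, iteratedDeriv_one, Nat.factorial]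
      push_cast
      ring
    rw [hfun]
    exact comb
  have h43 : (fun τ : ℝ => τ ^ 4) =O[nhds 0] fun τ : ℝ => τ ^ 3 := by
    rw [Asymptotics.isBigO_iff]
    refine ⟨1, ?_⟩
    have hball : ∀ᶠ τ : ℝ in nhds 0, |τ| ≤ 1 := by
      rw [Metric.eventually_nhds_iff]
      exact ⟨1, one_pos, fun {y} hy => by
        rw [Real.dist_eq, sub_zero] at hy; exact hy.le⟩
    filter_upwards [hball] with τ hτ
    rw [Real.norm_eq_abs, Real.norm_eq_abs, abs_pow, abs_pow, one_mul]
    calc |τ| ^ 4 = |τ| * |τ| ^ 3 := by ring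
      _ ≤ 1 * |τ| ^ 3 := by gcongr
      _ = |τ| ^ 3 := one_mul _
  constructor
  · intro w
    have h1 := (key w).trans h43
    have h2 := (isBigO_refl (fun τ : ℝ => τ ^ 3) (nhds 0)).const_mul_left
      ((1/6 - w/2) * iteratedDeriv 3 q 0)
    exact (h1.add h2).congr_left fun τ => by ring
  · exact (key (1/3)).congr_left fun τ => by norm_num
end

section
/- Let W(r) be defined by W(r) = 0 for |r| ≥ 1 and W(r) = 1 for |r| ≤ 1 (with either value at |r| = 1), and let Ψ(r) = 1 - W(r) + W(r)·r. Then for all r ≠ 0 and all previous values ψ_prev ∈ [0, 2] obtained as Ψ(r') for some r', one has -2 ≤ Ψ(r)/r - ψ_prev ≤ 2. -/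
theorem stmt4 (W : ℝ → ℝ)
    (hW : ∀ r : ℝ, (|r| < 1 → W r = 1) ∧ (|r| > 1 → W r = 0) ∧
      (|r| = 1 → W r = 0 ∨ W r = 1))
    (Ψ : ℝ → ℝ) (hΨ : ∀ r, Ψ r = 1 - W r + W r * r)
    (r : ℝ) (hr : r ≠ 0) (ψprev : ℝ) (r' : ℝ) (hprev : ψprev = Ψ r')
    (hprev0 : 0 ≤ ψprev) (hprev2 : ψprev ≤ 2) :
    -2 ≤ Ψ r / r - ψprev ∧ Ψ r / r - ψprev ≤ 2 := by
  -- ψprev ≤ 1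
  have hψ1 : ψprev ≤ 1 := by
    rw [hprev, hΨ r']
    rcases lt_trichotomy |r'| 1 with h | h | h
    · rw [(hW r').1 h]
      have := (abs_lt.mp h).2
      linarith
    · rcases (hW r').2.2 h with h0 | h1
      · rw [h0]; linarith
      · rw [h1]
        have := (le_abs_self r').trans h.le
        linarith
    · rw [(hW r').2.1 h]
      linarith
  -- bounds on Ψ r / r
  have hbound : -1 ≤ Ψ r / r ∧ Ψ r / r ≤ 1 := by
    rw [hΨ r]
    rcases lt_trichotomy |r| 1 with h | h | h
    · rw [(hW r).1 h]
      have : (1 - 1 + 1 * r) / r = 1 := by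
        field_simp
        ring
      rw [this]; constructor <;> norm_num
    · have hr1 : r = 1 ∨ r = -1 := abs_eq (by norm_num : (0:ℝ) ≤ 1) |>.mp h
      rcases (hW r).2.2 h with hc | hc <;> rcases hr1 with rfl | rfl <;>
        rw [hc] <;> norm_num
    · rw [(hW r).2.1 h]
      have h1 : (1 - 0 + 0 * r) / r = 1 / r := by ring
      rw [h1]
      have habs : |1 / r| ≤ 1 := by
        rw [abs_div, abs_one]
        rw [div_le_one (by positivity : (0:ℝ) < |r|)]
        linarith
      exact abs_le.mp habs
  constructor <;> [nlinarith [hbound.1]; nlinarith [hbound.2]]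
end

section
/- Suppose Q_i^n, Q_{i-1}^n, Q_i^{n-1}, Q_{i-1}^{n+1} are real numbers with Q_{i-1}^{n+1} ≠ Q_i^n, let r = (Q_{i-1}^n - Q_i^{n-1})/(Q_{i-1}^{n+1} - Q_i^n), let C > 0, and let ψ, ψ' ∈ ℝ satisfy -2 ≤ ψ/r - ψ' ≤ 2C (with r ≠ 0). If C(Q_i^n - Q_{i-1}^n) + (Q_i^n - Q_i^{n-1}) + (1/2)(ψ/r - ψ')(Q_{i-1}^n - Q_i^{n-1}) = 0, then min{Q_i^{n-1}, Q_{i-1}^n} ≤ Q_i^n ≤ max{Q_i^{n-1}, Q_{i-1}^n}. -/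
theorem stmt6 (Q B P A' : ℝ) (hAQ : A' ≠ Q)
    (r : ℝ) (hr : r = (B - P) / (A' - Q)) (hrne : r ≠ 0)
    (C : ℝ) (hC : 0 < C) (ψ ψ' : ℝ)
    (h1 : -2 ≤ ψ / r - ψ') (h2 : ψ / r - ψ' ≤ 2 * C)
    (hscheme : C * (Q - B) + (Q - P) + (1/2) * (ψ / r - ψ') * (B - P) = 0) :
    min P B ≤ Q ∧ Q ≤ max P B := by
  have hs : ∃ s, s = ψ / r - ψ' := ⟨_, rfl⟩
  obtain ⟨s, hs⟩ := hs
  rw [← hs] at h1 h2 hscheme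
  have ha : 0 ≤ C - s / 2 := by linarith
  have hb : 0 ≤ 1 + s / 2 := by linarith
  have hkey : (C - s / 2) * (Q - B) + (1 + s / 2) * (Q - P) = 0 := by linarith [hscheme]
  rcases le_total P B with h | h
  · rw [min_eq_left h, max_eq_right h]
    constructor <;> nlinarith
  · rw [min_eq_right h, max_eq_left h]
    constructor <;> nlinarith
end
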